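/- arXiv:1907.09697 — 4 statements merged into one kernel-verified Lean document; each statement's English description precedes it below -/
import Mathlib

section
/- Let f : ℝ^N → ℝ be differentiable, γ > 0, β ≥ 0, and suppose x^{k+1} is a minimizer of x ↦ γf(x) + ‖x - (x^k + β(x^k - x^{k-1}))‖²/2. Then f(x^{k+1}) + ‖x^{k+1} - x^k‖²/(2γ) ≤ f(x^k) + (β/(2γ))‖x^{k+1} - x^k‖² + (β/(2γ))‖x^k - x^{k-1}‖². -/
theorem hbppa_descent_raw {N : ℕ} (f : EuclideanSpace ℝ (Fin N) → ℝ) (γ β : ℝ)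
    (hγ : 0 < γ) (hβ : 0 ≤ β) (hf : Differentiable ℝ f)
    (xm x0 x1 : EuclideanSpace ℝ (Fin N))
    (hmin : ∀ x, γ * f x1 + ‖x1 - (x0 + β • (x0 - xm))‖ ^ 2 / 2 ≤
      γ * f x + ‖x - (x0 + β • (x0 - xm))‖ ^ 2 / 2) :
    f x1 + ‖x1 - x0‖ ^ 2 / (2 * γ) ≤
      f x0 + (β / (2 * γ)) * ‖x1 - x0‖ ^ 2 + (β / (2 * γ)) * ‖x0 - xm‖ ^ 2 := by
  have h := hmin x0
  set a := x1 - x0 with ha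
  set d := x0 - xm with hd
  have e1 : x1 - (x0 + β • d) = a - β • d := by
    rw [ha]; abel
  have e2 : x0 - (x0 + β • d) = -(β • d) := by
    rw [sub_add_eq_sub_sub, sub_self, zero_sub]
  rw [e1, e2, norm_neg] at h
  have hexp : ‖a - β • d‖ ^ 2 = ‖a‖ ^ 2 - 2 * (β * inner ℝ a d) + ‖β • d‖ ^ 2 := by
    rw [norm_sub_sq_real, real_inner_smul_right]
  rw [hexp] at h
  have hkey : γ * f x1 + ‖a‖ ^ 2 / 2 ≤ γ * f x0 + β * inner ℝ a d := by linarith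
  have hin : (inner ℝ a d : ℝ) ≤ (‖a‖ ^ 2 + ‖d‖ ^ 2) / 2 := by
    have := real_inner_le_norm a d
    nlinarith [sq_nonneg (‖a‖ - ‖d‖)]
  have hβin : β * inner ℝ a d ≤ β * ((‖a‖ ^ 2 + ‖d‖ ^ 2) / 2) :=
    mul_le_mul_of_nonneg_left hin hβ
  have h2 : γ * (f x1 + ‖a‖ ^ 2 / (2 * γ)) ≤
      γ * (f x0 + β / (2 * γ) * ‖a‖ ^ 2 + β / (2 * γ) * ‖d‖ ^ 2) := by
    field_simp
    have h3 : γ * f x1 + ‖a‖ ^ 2 / 2 ≤ γ * f x0 + β * ((‖a‖ ^ 2 + ‖d‖ ^ 2) / 2) := by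
      linarith
    nlinarith [mul_le_mul_of_nonneg_left h3 (by positivity : (0:ℝ) ≤ 2 * γ)]
  exact le_of_mul_le_mul_left h2 hγ
end

section
/- Let f : ℝ^N → ℝ, γ > 0, 0 < β < 1/2, and define the Lyapunov function H(x,y) = f(x) + (β/(2γ))‖x - y‖². If x^{k+1} = Prox_{γf}(x^k + β(x^k - x^{k-1})), then H(x^{k+1}, x^k) + ((1-2β)/(2γ))‖x^{k+1} - x^k‖² ≤ H(x^k, x^{k-1}). -/
theorem hbppa_lyapunov_descent {N : ℕ} (f : EuclideanSpace ℝ (Fin N) → ℝ) (γ β : ℝ)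
    (hγ : 0 < γ) (hβ0 : 0 < β) (hβ : β < 1 / 2)
    (H : EuclideanSpace ℝ (Fin N) → EuclideanSpace ℝ (Fin N) → ℝ)
    (hHdef : ∀ x y, H x y = f x + (β / (2 * γ)) * ‖x - y‖ ^ 2)
    (xm x0 x1 : EuclideanSpace ℝ (Fin N))
    (hmin : ∀ x, γ * f x1 + ‖x1 - (x0 + β • (x0 - xm))‖ ^ 2 / 2 ≤
      γ * f x + ‖x - (x0 + β • (x0 - xm))‖ ^ 2 / 2) :
    H x1 x0 + ((1 - 2 * β) / (2 * γ)) * ‖x1 - x0‖ ^ 2 ≤ H x0 xm := by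
  have key := hmin x0
  have h1 : x1 - (x0 + β • (x0 - xm)) = (x1 - x0) - β • (x0 - xm) := by abel
  have h2 : x0 - (x0 + β • (x0 - xm)) = -(β • (x0 - xm)) := by abel
  rw [h1, h2, norm_neg] at key
  set a := x1 - x0 with ha
  set b := x0 - xm with hb
  have e1 : ‖a - β • b‖ ^ 2 = ‖a‖ ^ 2 - 2 * (β * inner ℝ a b) + β ^ 2 * ‖b‖ ^ 2 := by
    rw [norm_sub_sq_real, real_inner_smul_right, norm_smul, mul_pow]
    simp [sq_abs]
  have e2 : ‖β • b‖ ^ 2 = β ^ 2 * ‖b‖ ^ 2 := by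
    rw [norm_smul, mul_pow]; simp [sq_abs]
  have cauchy : 2 * (inner ℝ a b : ℝ) ≤ ‖a‖ ^ 2 + ‖b‖ ^ 2 := by
    nlinarith [norm_sub_sq_real a b, sq_nonneg ‖a - b‖]
  rw [e1, e2] at key
  have goal2 : γ * f x1 + ((1 - β) / 2) * ‖a‖ ^ 2 ≤ γ * f x0 + (β / 2) * ‖b‖ ^ 2 := by
    nlinarith [key, cauchy, hβ0]
  rw [hHdef, hHdef]
  have h2γ : (0:ℝ) < 2 * γ := by linarith
  rw [div_mul_eq_mul_div, div_mul_eq_mul_div, div_mul_eq_mul_div, ← sub_nonneg]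
  have expand : f x0 + β * ‖b‖ ^ 2 / (2 * γ) -
      (f x1 + β * ‖a‖ ^ 2 / (2 * γ) + (1 - 2 * β) * ‖a‖ ^ 2 / (2 * γ)) =
      ((γ * f x0 + (β / 2) * ‖b‖ ^ 2) - (γ * f x1 + ((1 - β) / 2) * ‖a‖ ^ 2)) / γ := by
    field_simp
    ring
  rw [expand]
  exact div_nonneg (by linarith) (le_of_lt hγ)
end

section
/- Let f : ℝ^N → ℝ be bounded below, γ > 0, 0 < β < 1/2, and let (x^k) satisfy x^{k+1} = Prox_{γf}(x^k + β(x^k - x^{k-1})) for all k ≥ 1. Then lim_{k→∞} ‖x^{k+1} - x^k‖ = 0. -/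
open Filter

lemma aux_norm_ineq {N : ℕ} (β : ℝ) (hβ0 : 0 < β)
    (u v : EuclideanSpace ℝ (Fin N)) :
    (1 - β) * ‖u‖ ^ 2 - β * (1 - β) * ‖v‖ ^ 2 ≤ ‖u - β • v‖ ^ 2 := by
  have hexp : ‖u - β • v‖ ^ 2 = ‖u‖ ^ 2 - 2 * inner ℝ u (β • v) + ‖β • v‖ ^ 2 := by
    rw [@norm_sub_sq_real]
  have hin : inner ℝ u (β • v) = β * (inner ℝ u v : ℝ) := real_inner_smul_right u v β
  have hns : ‖β • v‖ = β * ‖v‖ := by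
    rw [norm_smul, Real.norm_eq_abs, abs_of_pos hβ0]
  have hcs : (inner ℝ u v : ℝ) ≤ ‖u‖ * ‖v‖ := real_inner_le_norm u v
  rw [hexp, hin, hns]
  nlinarith [sq_nonneg (‖u‖ - ‖v‖), norm_nonneg u, norm_nonneg v]

theorem hbppa_successive_diff_to_zero {N : ℕ} (f : EuclideanSpace ℝ (Fin N) → ℝ)
    (γ β : ℝ) (hγ : 0 < γ) (hβ0 : 0 < β) (hβ : β < 1 / 2)
    (hbdd : BddBelow (Set.range f)) (x : ℕ → EuclideanSpace ℝ (Fin N))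
    (hprox : ∀ k : ℕ, 1 ≤ k → ∀ y,
      γ * f (x (k + 1)) + ‖x (k + 1) - (x k + β • (x k - x (k - 1)))‖ ^ 2 / 2 ≤
        γ * f y + ‖y - (x k + β • (x k - x (k - 1)))‖ ^ 2 / 2) :
    Filter.Tendsto (fun k => ‖x (k + 1) - x k‖) Filter.atTop (nhds 0) := by
  set G : ℕ → ℝ := fun n => γ * f (x (n + 1)) + β * ‖x (n + 1) - x n‖ ^ 2 / 2 with hG
  clear_value G
  have key : ∀ n : ℕ, G (n + 1) + (1 - 2 * β) / 2 * ‖x (n + 2) - x (n + 1)‖ ^ 2 ≤ G n := by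
    intro n
    have h := hprox (n + 1) (Nat.le_add_left 1 n) (x (n + 1))
    simp only [Nat.add_sub_cancel] at h
    have hLHS : x (n + 1 + 1) - (x (n + 1) + β • (x (n + 1) - x n)) =
        (x (n + 2) - x (n + 1)) - β • (x (n + 1) - x n) := by
      abel
    have hRHS : x (n + 1) - (x (n + 1) + β • (x (n + 1) - x n)) =
        -(β • (x (n + 1) - x n)) := by abel
    rw [hLHS, hRHS] at h
    have hnn : ‖-(β • (x (n + 1) - x n))‖ ^ 2 = β ^ 2 * ‖x (n + 1) - x n‖ ^ 2 := by
      rw [norm_neg, norm_smul, Real.norm_eq_abs, abs_of_pos hβ0, mul_pow]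
    rw [hnn] at h
    have hineq := aux_norm_ineq β hβ0 (x (n + 2) - x (n + 1)) (x (n + 1) - x n)
    simp only [hG]
    have h2 : x (n + 1 + 1) = x (n + 2) := by norm_num
    rw [h2] at h
    nlinarith [h, hineq]
  have hanti : Antitone G := by
    apply antitone_nat_of_succ_le
    intro n
    have h0 : 0 ≤ (1 - 2 * β) / 2 * ‖x (n + 2) - x (n + 1)‖ ^ 2 :=
      mul_nonneg (by linarith) (sq_nonneg _)
    have hk := key n
    linarith
  obtain ⟨c, hc⟩ := hbdd
  have hGbdd : BddBelow (Set.range G) := by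
    refine ⟨γ * c, ?_⟩
    rintro _ ⟨n, rfl⟩
    have h1 : c ≤ f (x (n + 1)) := hc ⟨x (n + 1), rfl⟩
    have h2 : 0 ≤ β * ‖x (n + 1) - x n‖ ^ 2 / 2 := by positivity
    simp only [hG]
    nlinarith
  have hGtend : Tendsto G atTop (nhds (⨅ n, G n)) :=
    tendsto_atTop_ciInf hanti hGbdd
  have hGtend' : Tendsto (fun n => G (n + 1)) atTop (nhds (⨅ n, G n)) :=
    hGtend.comp (tendsto_add_atTop_nat 1)
  have hdiff : Tendsto (fun n => G n - G (n + 1)) atTop (nhds 0) := by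
    have := hGtend.sub hGtend'
    simpa using this
  have hsq : Tendsto (fun n => ‖x (n + 2) - x (n + 1)‖ ^ 2) atTop (nhds 0) := by
    have hc2 : (0 : ℝ) < (1 - 2 * β) / 2 := by linarith
    have hupper : ∀ n, ‖x (n + 2) - x (n + 1)‖ ^ 2 ≤ (G n - G (n + 1)) / ((1 - 2 * β) / 2) := by
      intro n
      rw [le_div_iff₀ hc2]
      nlinarith [key n]
    have hto : Tendsto (fun n => (G n - G (n + 1)) / ((1 - 2 * β) / 2)) atTop (nhds 0) := by
      simpa using hdiff.div_const ((1 - 2 * β) / 2)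
    exact squeeze_zero (fun n => sq_nonneg _) hupper hto
  have hnorm : Tendsto (fun n => ‖x (n + 2) - x (n + 1)‖) atTop (nhds 0) := by
    have := (Real.continuous_sqrt.tendsto 0).comp hsq
    simp only [Real.sqrt_zero] at this
    exact this.congr fun n => by
      simp [Function.comp, Real.sqrt_sq (norm_nonneg _)]
  exact (Filter.tendsto_add_atTop_iff_nat 1).mp hnorm
end

section
/- Let f : ℝ^N → ℝ be differentiable and bounded below, γ > 0, 0 < β < 1/2, and (x^k) generated by x^{k+1} = Prox_{γf}(x^k + β(x^k - x^{k-1})). Then lim_{k→∞} ‖∇f(x^k)‖ = 0. -/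
open InnerProductSpace Filter

lemma prox_grad' {N : ℕ} (f : EuclideanSpace ℝ (Fin N) → ℝ) (γ : ℝ)
    (hdiff : Differentiable ℝ f) (p z : EuclideanSpace ℝ (Fin N))
    (hmin : ∀ y, γ * f p + ‖p - z‖^2/2 ≤ γ * f y + ‖y - z‖^2/2) :
    γ • gradient f p = z - p := by
  have h1 : HasFDerivAt f (toDual ℝ _ (gradient f p)) p :=
    ((hdiff p).hasGradientAt).hasFDerivAt
  have h2 : HasFDerivAt (fun y => ‖y - z‖^2 / 2) (innerSL ℝ (p - z)) p := by
    have h3 := (((hasFDerivAt_id p).sub_const z).norm_sq).const_mul ((2:ℝ)⁻¹)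
    have h5 : (fun y : EuclideanSpace ℝ (Fin N) => ‖y - z‖^2 / 2) =
        (fun y => 2⁻¹ * ‖id y - z‖ ^ 2) := by
      funext y
      simp [div_eq_inv_mul]
    rw [h5]
    refine h3.congr_fderiv ?_
    ext w
    simp [two_smul]
    ring
  have hsum := (h1.const_mul γ).add h2
  have hloc : IsLocalMin (fun y => γ * f y + ‖y - z‖^2/2) p :=
    Filter.Eventually.of_forall hmin
  have hz := hloc.hasFDerivAt_eq_zero hsum
  have hv : ∀ w, inner ℝ (γ • gradient f p + (p - z)) w = (0:ℝ) := by
    intro w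
    have h4 := ContinuousLinearMap.ext_iff.mp hz w
    simp only [ContinuousLinearMap.add_apply, ContinuousLinearMap.smul_apply,
      ContinuousLinearMap.zero_apply, smul_eq_mul, toDual_apply_apply, innerSL_apply_apply] at h4
    rw [inner_add_left, real_inner_smul_left]
    exact h4
  have h0 : γ • gradient f p + (p - z) = 0 := by
    have := hv (γ • gradient f p + (p - z))
    rwa [inner_self_eq_zero] at this
  have := eq_neg_of_add_eq_zero_left h0
  rwa [neg_sub] at this

theorem hbppa_gradient_to_zero {N : ℕ} (f : EuclideanSpace ℝ (Fin N) → ℝ)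
    (γ β : ℝ) (hγ : 0 < γ) (hβ0 : 0 < β) (hβ : β < 1 / 2)
    (hdiff : Differentiable ℝ f)
    (hbdd : BddBelow (Set.range f)) (x : ℕ → EuclideanSpace ℝ (Fin N))
    (hprox : ∀ k : ℕ, 1 ≤ k → ∀ y,
      γ * f (x (k + 1)) + ‖x (k + 1) - (x k + β • (x k - x (k - 1)))‖ ^ 2 / 2 ≤
        γ * f y + ‖y - (x k + β • (x k - x (k - 1)))‖ ^ 2 / 2) :
    Filter.Tendsto (fun k => ‖gradient f (x k)‖) Filter.atTop (nhds 0) := by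
  set a : ℕ → ℝ := fun k => ‖x (k + 1) - x k‖ with ha_def
  have ha_nn : ∀ k, 0 ≤ a k := fun k => norm_nonneg _
  -- descent step
  have hstep : ∀ k : ℕ,
      γ * f (x (k+2)) + (1/4) * a (k+1)^2 + (1/4 - β^2) * a k ^2 ≤
        γ * f (x (k+1)) + (1/4) * a k ^2 := by
    intro k
    have h0 := hprox (k+1) (by omega) (x (k+1))
    have e1 : (k + 1 : ℕ) - 1 = k := by omega
    rw [e1] at h0
    set z := x (k+1) + β • (x (k+1) - x k) with hz
    have e2 : ‖x (k+1) - z‖ = β * a k := by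
      have : x (k+1) - z = -(β • (x (k+1) - x k)) := by rw [hz]; abel
      rw [this, norm_neg, norm_smul, Real.norm_eq_abs, abs_of_pos hβ0]
    have e3 : a (k+1) - β * a k ≤ ‖x (k+1+1) - z‖ := by
      have : x (k+1+1) - z = (x (k+2) - x (k+1)) - β • (x (k+1) - x k) := by
        rw [hz]; abel
      calc a (k+1) - β * a k
          = ‖x (k+2) - x (k+1)‖ - ‖β • (x (k+1) - x k)‖ := by
            rw [norm_smul, Real.norm_eq_abs, abs_of_pos hβ0]
        _ ≤ ‖(x (k+2) - x (k+1)) - β • (x (k+1) - x k)‖ := norm_sub_norm_le _ _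
        _ = ‖x (k+1+1) - z‖ := by rw [this]
    rw [e2] at h0
    set D := ‖x (k+1+1) - z‖ with hD_def
    have hD : (0:ℝ) ≤ D := norm_nonneg _
    have h0' : γ * f (x (k+2)) + D^2/2 ≤ γ * f (x (k+1)) + (β * a k)^2/2 := h0
    have e5 : a (k+1)^2/2 - β^2 * a k^2 ≤ D^2 := by
      rcases le_or_gt (a (k+1)) (β * a k) with h | h
      · nlinarith [sq_nonneg D, mul_self_le_mul_self (ha_nn (k+1)) h]
      · have h6 : (a (k+1) - β * a k) * (a (k+1) - β * a k) ≤ D * D :=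
          mul_self_le_mul_self (by linarith) e3
        nlinarith [sq_nonneg (a (k+1) - 2*β*a k)]
    nlinarith [e5, h0']
  -- Lyapunov function
  set E : ℕ → ℝ := fun n => γ * f (x (n+1)) + (1/4) * a n^2 with hE_def
  set c : ℝ := 1/4 - β^2 with hc_def
  have hc : 0 < c := by rw [hc_def]; nlinarith
  have hE : ∀ n, E (n+1) + c * a n^2 ≤ E n := fun n => hstep n
  obtain ⟨B, hB⟩ := hbdd
  have hfB : ∀ v, B ≤ f v := fun v => hB ⟨v, rfl⟩
  have hEl : ∀ n, γ * B ≤ E n := by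
    intro n
    have h1 := hfB (x (n+1))
    have h2 := mul_le_mul_of_nonneg_left h1 hγ.le
    have h3 := sq_nonneg (a n)
    rw [hE_def]
    dsimp only
    linarith
  have hpartial : ∀ n, E n + c * ∑ i ∈ Finset.range n, a i^2 ≤ E 0 := by
    intro n
    induction n with
    | zero => simp
    | succ n ih =>
      rw [Finset.sum_range_succ]
      have := hE n
      nlinarith
  have hsum_le : ∀ n, ∑ i ∈ Finset.range n, a i^2 ≤ (E 0 - γ*B)/c := by
    intro n
    rw [le_div_iff₀ hc]
    have := hpartial n
    have := hEl n
    nlinarith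
  have hsummable : Summable (fun k => a k^2) :=
    summable_of_sum_range_le (fun n => sq_nonneg (a n)) hsum_le
  have ha2 := hsummable.tendsto_atTop_zero
  have haz : Tendsto a atTop (nhds 0) := by
    have h := ha2.sqrt
    rw [Real.sqrt_zero] at h
    exact h.congr fun k => Real.sqrt_sq (ha_nn k)
  -- gradient bound
  have hgb : ∀ k : ℕ, ‖gradient f (x (k+2))‖ ≤ (a (k+1) + β * a k)/γ := by
    intro k
    have hmin := hprox (k+1) (by omega)
    simp only [Nat.add_sub_cancel] at hmin
    set z := x (k+1) + β • (x (k+1) - x k) with hz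
    have hg : γ • gradient f (x (k+2)) = z - x (k+2) :=
      prox_grad' f γ hdiff (x (k+1+1)) z hmin
    have hn : ‖z - x (k+2)‖ ≤ a (k+1) + β * a k := by
      have e : z - x (k+2) = -(x (k+2) - x (k+1)) + β • (x (k+1) - x k) := by
        rw [hz]; abel
      rw [e]
      refine (norm_add_le _ _).trans ?_
      rw [norm_neg, norm_smul, Real.norm_eq_abs, abs_of_pos hβ0]
    have heq : γ * ‖gradient f (x (k+2))‖ = ‖z - x (k+2)‖ := by
      rw [← hg, norm_smul, Real.norm_eq_abs, abs_of_pos hγ]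
    rw [le_div_iff₀ hγ]
    nlinarith [norm_nonneg (gradient f (x (k+2)))]
  -- squeeze
  have hb : Tendsto (fun m => (a (m-1) + β * a (m-2))/γ) atTop (nhds 0) := by
    have h1 := haz.comp (tendsto_sub_atTop_nat 1)
    have h2 := haz.comp (tendsto_sub_atTop_nat 2)
    have h3 := (h1.add (h2.const_mul β)).div_const γ
    simpa using h3
  refine squeeze_zero' (Filter.Eventually.of_forall fun m => norm_nonneg _) ?_ hb
  filter_upwards [eventually_ge_atTop 2] with m hm
  obtain ⟨k, rfl⟩ := Nat.exists_eq_add_of_le hm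
  simp only [show 2+k-1 = k+1 from by omega, show 2+k-2 = k from by omega,
    show 2+k = k+2 from by omega]
  exact hgb k
end
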